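/- Let I ⊂ S be a monomial ideal. If S/I admits a pretty clean filtration F, then Supp(F) = Ass(S/I); in particular, if Ass(S/I^m) = Min(I^m) and S/I^m has a prime filtration all of whose quotients' primes are not all minimal, then S/I^m is not pretty clean. -/

import Mathlib

open MvPolynomial

/-! ### Simplicial complexes, matroids -/

section Complexes

variable {α : Type*}

/-- A simplicial complex: a nonempty collection of finite subsets closed under subsets. -/
def IsSimplicialComplex (Δ : Set (Finset α)) : Prop :=
  Δ.Nonempty ∧ ∀ F ∈ Δ, ∀ G ⊆ F, G ∈ Δ

/-- The facets (maximal faces) of a complex. -/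
def facets (Δ : Set (Finset α)) : Set (Finset α) :=
  {F | F ∈ Δ ∧ ∀ G ∈ Δ, F ⊆ G → F = G}

/-- A complex is pure if all facets have the same cardinality. -/
def IsPure (Δ : Set (Finset α)) : Prop :=
  ∀ F ∈ facets Δ, ∀ G ∈ facets Δ, F.card = G.card

/-- A matroid: a simplicial complex with the augmentation exchange property. -/
def IsMatroidComplex [DecidableEq α] (Δ : Set (Finset α)) : Prop :=
  IsSimplicialComplex Δ ∧
    ∀ F ∈ Δ, ∀ G ∈ Δ, F.card < G.card → ∃ i ∈ G \ F, insert i F ∈ Δ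

/-- The complement complex `Δᶜ`, generated by the complements of the facets of `Δ`. -/
def complementComplex {n : ℕ} (Δ : Set (Finset (Fin n))) : Set (Finset (Fin n)) :=
  {G | ∃ F ∈ facets Δ, G ⊆ Fᶜ}

end Complexes

/-! ### Stanley-Reisner ideals and symbolic powers -/

section SR

variable (k : Type*) [Field k] {n : ℕ}

/-- The monomial prime `P_F = (x_i : i ∈ F)`. -/
noncomputable def varIdeal (F : Finset (Fin n)) : Ideal (MvPolynomial (Fin n) k) :=
  Ideal.span ((fun i => (X i : MvPolynomial (Fin n) k)) '' ↑F)

/-- The Stanley-Reisner ideal of a complex. -/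
noncomputable def SRIdeal (Δ : Set (Finset (Fin n))) : Ideal (MvPolynomial (Fin n) k) :=
  Ideal.span {u | ∃ F : Finset (Fin n), F ∉ Δ ∧ u = ∏ i ∈ F, X i}

/-- The `m`-th symbolic power of the Stanley-Reisner ideal:
`I_Δ^{(m)} = ⋂_{F ∈ F(Δᶜ)} P_F^m`. -/
noncomputable def symbPowSR (Δ : Set (Finset (Fin n))) (m : ℕ) :
    Ideal (MvPolynomial (Fin n) k) :=
  ⨅ F ∈ facets (complementComplex Δ), (varIdeal k F) ^ m

variable {σ : Type*}

/-- A monomial (with coefficient 1). -/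
def IsMonomialElem (p : MvPolynomial σ k) : Prop := ∃ d, p = monomial d 1

/-- A monomial ideal: generated by monomials. -/
def IsMonomialIdeal (I : Ideal (MvPolynomial σ k)) : Prop :=
  ∃ G : Set (MvPolynomial σ k), (∀ g ∈ G, IsMonomialElem k g) ∧ I = Ideal.span G

/-- Complete intersection monomial ideal: generated by a regular sequence of monomials. -/
def IsCIMonomialIdeal (I : Ideal (MvPolynomial σ k)) : Prop :=
  ∃ rs : List (MvPolynomial σ k), (∀ x ∈ rs, IsMonomialElem k x) ∧
    RingTheory.Sequence.IsRegular (MvPolynomial σ k) rs ∧ I = Ideal.span {x | x ∈ rs}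

end SR

/-! ### Prime filtrations, clean and pretty clean -/

section Clean

variable (k : Type*) [Field k] {σ : Type*}

/-- A prime filtration `I = I₀ ⊂ I₁ ⊂ ⋯ ⊂ I_r = S` of monomial ideals with cyclic
quotients `I_i/I_{i-1} ≅ S/p_i` (realized by `I_i = I_{i-1} + (v)` and `I_{i-1} : v = p_i`). -/
structure PrimeFiltration (I : Ideal (MvPolynomial σ k)) where
  len : ℕ
  c : ℕ → Ideal (MvPolynomial σ k)
  p : ℕ → Ideal (MvPolynomial σ k)
  first : c 0 = I
  last : c len = ⊤
  strict : ∀ i < len, c i < c (i + 1)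
  monomial : ∀ i ≤ len, IsMonomialIdeal k (c i)
  prime : ∀ i < len, (p (i + 1)).IsPrime
  cyclic : ∀ i < len, ∃ v, c (i + 1) = c i ⊔ Ideal.span {v} ∧
    Submodule.colon (c i) (Ideal.span {v}) = p (i + 1)

/-- The support of a prime filtration: the set of primes `p₁, …, p_r`. -/
def PrimeFiltration.supp {I : Ideal (MvPolynomial σ k)} (F : PrimeFiltration k I) :
    Set (Ideal (MvPolynomial σ k)) :=
  {q | ∃ i < F.len, q = F.p (i + 1)}

/-- `S/I` is clean: it admits a prime filtration with support `Min(I)`. -/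
def IsCleanIdeal (I : Ideal (MvPolynomial σ k)) : Prop :=
  ∃ F : PrimeFiltration k I, F.supp = I.minimalPrimes

/-- Pretty clean filtration: `p_i ⊆ p_j` with `i < j` forces `p_i = p_j`. -/
def PrimeFiltration.IsPrettyClean {I : Ideal (MvPolynomial σ k)}
    (F : PrimeFiltration k I) : Prop :=
  ∀ i j, 0 < i → i < j → j ≤ F.len → F.p i ≤ F.p j → F.p i = F.p j

/-- `S/I` is pretty clean: it admits a pretty clean prime filtration. -/
def IsPrettyCleanIdeal (I : Ideal (MvPolynomial σ k)) : Prop :=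
  ∃ F : PrimeFiltration k I, F.IsPrettyClean

end Clean

/-! ### Dimension, depth, Cohen-Macaulayness -/

section CM

/-- Krull dimension of a module, as `dim S/ann M`. -/
noncomputable def modDim (S : Type*) [CommRing S] (M : Type*) [AddCommGroup M]
    [Module S M] : WithBot (WithTop ℕ) :=
  ringKrullDim (S ⧸ Module.annihilator S M)

variable (k : Type*) [Field k] (n : ℕ)

/-- The graded maximal ideal `(x₁, …, xₙ)`. -/
noncomputable def maxIdeal : Ideal (MvPolynomial (Fin n) k) := Ideal.span (Set.range X)

/-- A module over `k[x₁,…,xₙ]` is Cohen-Macaulay if it is trivial or admits a weakly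
regular sequence in the graded maximal ideal whose length equals its Krull dimension
(i.e. depth = dim). -/
def IsCMmod (M : Type*) [AddCommGroup M] [Module (MvPolynomial (Fin n) k) M] : Prop :=
  Subsingleton M ∨ ∃ rs : List (MvPolynomial (Fin n) k),
    (∀ x ∈ rs, x ∈ maxIdeal k n) ∧ RingTheory.Sequence.IsWeaklyRegular M rs ∧
      modDim (MvPolynomial (Fin n) k) M = (rs.length : WithBot (WithTop ℕ))

/-- `S/I` is Cohen-Macaulay. -/
def IsCMIdeal (I : Ideal (MvPolynomial (Fin n) k)) : Prop :=
  IsCMmod k n (MvPolynomial (Fin n) k ⧸ I)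

/-- The subquotient `A/B` of two ideals, as a module. -/
def subQuot {S : Type*} [CommRing S] (A B : Ideal S) :=
  A ⧸ (Submodule.comap A.subtype B)

noncomputable instance {S : Type*} [CommRing S] (A B : Ideal S) : AddCommGroup (subQuot A B) := by
  unfold subQuot; infer_instance

noncomputable instance {S : Type*} [CommRing S] (A B : Ideal S) : Module S (subQuot A B) := by
  unfold subQuot; infer_instance

/-- Sequentially Cohen-Macaulay: there is a chain of monomial ideals
`I = I₀ ⊂ ⋯ ⊂ I_r = S` with Cohen-Macaulay quotients of strictly increasing dimension. -/
def IsSeqCMIdeal (I : Ideal (MvPolynomial (Fin n) k)) : Prop :=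
  ∃ (r : ℕ) (c : ℕ → Ideal (MvPolynomial (Fin n) k)),
    c 0 = I ∧ c r = ⊤ ∧ (∀ i ≤ r, IsMonomialIdeal k (c i)) ∧
    (∀ i < r, c i < c (i + 1)) ∧
    (∀ i < r, IsCMmod k n (subQuot (c (i + 1)) (c i))) ∧
    ∀ i, i + 1 < r →
      modDim (MvPolynomial (Fin n) k) (subQuot (c (i + 1)) (c i)) <
        modDim (MvPolynomial (Fin n) k) (subQuot (c (i + 2)) (c (i + 1)))

end CM

/-! ### Graphs of 1-dimensional complexes -/

section Graphs

/-- The graph whose edges are the 2-element faces of `Δ`. -/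
def complexGraph {n : ℕ} (Δ : Set (Finset (Fin n))) : SimpleGraph (Fin n) where
  Adj u v := u ≠ v ∧ ({u, v} : Finset (Fin n)) ∈ Δ
  symm := ⟨by
    intro u v h
    exact ⟨h.1.symm, by rw [Finset.pair_comm]; exact h.2⟩⟩
  loopless := ⟨fun u h => h.1 rfl⟩

end Graphs

/-! ### Linear quotients -/

section LQ

variable (k : Type*) [Field k] {σ : Type*}

/-- A monomial ideal has linear quotients: its minimal generators can be ordered
`u₁, …, u_s` so that each colon `(u₁,…,u_{i-1}) : u_i` is generated by variables. -/
def HasLinearQuotients (J : Ideal (MvPolynomial σ k)) : Prop :=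
  ∃ L : List (MvPolynomial σ k), (∀ u ∈ L, IsMonomialElem k u) ∧
    J = Ideal.span {u | u ∈ L} ∧
    ∀ i (h : i < L.length), 0 < i → ∃ V : Set σ,
      Submodule.colon (Ideal.span {u | u ∈ L.take i}) (Ideal.span {L.get ⟨i, h⟩}) =
        Ideal.span ((fun s => (X s : MvPolynomial σ k)) '' V)

end LQ

/-! ### Symbolic powers via saturation at minimal primes -/

section Symb

variable {S : Type*} [CommRing S]

/-- The contraction of `J S_P` back to `S`: `{x | ∃ s ∉ P, s·x ∈ J}`. -/
def satAtPrime (J P : Ideal S) (hP : P.IsPrime) : Ideal S where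
  carrier := {x | ∃ s, s ∉ P ∧ s * x ∈ J}
  zero_mem' := ⟨1, fun h => hP.ne_top ((Ideal.eq_top_iff_one P).2 h), by simp⟩
  add_mem' := by
    rintro a b ⟨s, hs, hsa⟩ ⟨t, ht, htb⟩
    refine ⟨s * t, fun h => ((hP.mem_or_mem h).elim hs ht), ?_⟩
    have : s * t * (a + b) = t * (s * a) + s * (t * b) := by ring
    rw [this]
    exact Ideal.add_mem _ (Ideal.mul_mem_left _ _ hsa) (Ideal.mul_mem_left _ _ htb)
  smul_mem' := by
    rintro r a ⟨s, hs, hsa⟩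
    refine ⟨s, hs, ?_⟩
    have : s * (r • a) = r * (s * a) := by simp [smul_eq_mul]; ring
    rw [this]
    exact Ideal.mul_mem_left _ _ hsa

/-- The `m`-th symbolic power: the intersection over the minimal primes `P` of `I` of the
`P`-primary components of `I^m` (contractions of `I^m S_P`). -/
noncomputable def symbolicPower (I : Ideal S) (m : ℕ) : Ideal S :=
  sInf {J | ∃ P, ∃ h : P ∈ I.minimalPrimes, J = satAtPrime (I ^ m) P h.1.1}

end Symb

/-!
Write the filtration as `I = I₀ ⊂ ⋯ ⊂ I_r = S` with `I_{j+1} = I_j + (v_j)` and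
`I_j : v_j = p_{j+1}`. If `P = √(I_j : w)` is prime, then either `P = √(I_{j+1} : w)` or
`P = p_{j+1}`; as `I_r : w = S`, climbing the filtration shows that every associated prime of
`S/I` is some `p_i`. Conversely `p_{i+1} = I_i : v_i`, and pretty cleanness lets this witness be
pulled down to `I₀ = I`: at a step with `p_{j+1} ⊄ p_{i+1}`, multiplying the witness by an
element of `p_{j+1} \ p_{i+1}` does not change the colon ideal.
-/

namespace Ideal

variable {S : Type*} [CommRing S] {J P Q : Ideal S}

theorem colon_singleton_mul (J : Ideal S) (x y : S) :
    J.colon {x * y} = (J.colon {y}).colon {x} := by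
  ext t
  simp [smul_eq_mul, mul_assoc]

theorem colon_singleton_add_of_mem {a : S} (ha : a ∈ J) (y : S) :
    J.colon {a + y} = J.colon {y} := by
  ext t
  simp only [Submodule.mem_colon_singleton, smul_eq_mul, mul_add]
  exact J.add_mem_iff_right (J.mul_mem_left t ha)

theorem IsPrime.colon_singleton_of_notMem (hP : P.IsPrime) {s : S} (hs : s ∉ P) :
    P.colon {s} = P := by
  ext t
  simp only [Submodule.mem_colon_singleton, smul_eq_mul]
  exact ⟨fun h => (hP.mem_or_mem h).resolve_right hs, fun h => P.mul_mem_right s h⟩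

theorem radical_colon_singleton_of_notMem {K : Ideal S} (hK : K.radical = P) (hP : P.IsPrime)
    {x : S} (hx : x ∉ P) : (K.colon {x}).radical = P := by
  refine le_antisymm (fun t ht => ?_) (hK ▸ radical_mono le_colon)
  obtain ⟨m, hm⟩ := ht
  have : t ^ m * x ∈ P := hK ▸ le_radical (Submodule.mem_colon_singleton.mp hm)
  exact hP.mem_of_pow_mem m ((hP.mem_or_mem this).resolve_right hx)

theorem Quotient.bot_colon_singleton_mk (J : Ideal S) (w : S) :
    (⊥ : Submodule S (S ⧸ J)).colon {Quotient.mk J w} = J.colon {w} := by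
  ext t
  simp [Algebra.smul_def, ← map_mul, Quotient.eq_zero_iff_mem]

theorem isAssociatedPrime_quotient_iff :
    IsAssociatedPrime P (S ⧸ J) ↔ P.IsPrime ∧ ∃ w, P = (J.colon {w}).radical := by
  simp only [IsAssociatedPrime, Submodule.isAssociatedPrime_def,
    Quotient.mk_surjective.exists, Quotient.bot_colon_singleton_mk]

theorem colon_singleton_mul_eq_of_sup {v w s : S} (hP : P.IsPrime) (hs : s ∈ J.colon {v})
    (hsP : s ∉ P) (hw : (J ⊔ span {v}).colon {w} = P) : J.colon {s * w} = P := by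
  have hle : J ⊔ span {v} ≤ J.colon {s} := by
    refine sup_le le_colon (span_le.mpr ?_)
    simpa [mul_comm] using hs
  refine le_antisymm ?_ ?_
  · calc J.colon {s * w} ≤ (J ⊔ span {v}).colon {s * w} :=
          Submodule.colon_mono le_sup_left subset_rfl
      _ = P.colon {s} := by rw [colon_singleton_mul, hw]
      _ = P := hP.colon_singleton_of_notMem hsP
  · calc P = (J ⊔ span {v}).colon {w} := hw.symm
      _ ≤ (J.colon {s}).colon {w} := Submodule.colon_mono hle subset_rfl
      _ = J.colon {s * w} := by rw [← colon_singleton_mul, mul_comm]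

theorem radical_colon_sup_eq_or_eq {v w : S} (hP : P.IsPrime) (hQ : Q.IsPrime)
    (hv : J.colon {v} = Q) (hw : (J.colon {w}).radical = P) :
    ((J ⊔ span {v}).colon {w}).radical = P ∨ P = Q := by
  refine or_iff_not_imp_left.mpr fun hne => ?_
  have hle : P ≤ ((J ⊔ span {v}).colon {w}).radical :=
    hw ▸ radical_mono (Submodule.colon_mono le_sup_left subset_rfl)
  obtain ⟨x, ⟨n, hn⟩, hxP⟩ := SetLike.exists_of_lt (lt_of_le_of_ne hle (Ne.symm hne))
  obtain ⟨a, ha, _, hb, hab⟩ :=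
    Submodule.mem_sup.mp (Submodule.mem_colon_singleton.mp hn)
  obtain ⟨r, rfl⟩ := mem_span_singleton'.mp hb
  have hxw : x ^ n * w = a + r * v := by simpa using hab.symm
  have hPr : P = (Q.colon {r}).radical :=
    calc P = (J.colon {x ^ n * w}).radical := by
          rw [colon_singleton_mul, radical_colon_singleton_of_notMem hw hP
            (fun h => hxP (hP.mem_of_pow_mem n h))]
      _ = (J.colon {r * v}).radical := by rw [hxw, colon_singleton_add_of_mem ha]
      _ = (Q.colon {r}).radical := by rw [colon_singleton_mul, hv]
  by_cases hr : r ∈ Q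
  · rw [(Submodule.colon_eq_top_iff_subset _).mpr (Set.singleton_subset_iff.mpr hr),
      radical_top] at hPr
    exact absurd hPr hP.ne_top
  · rw [hPr, hQ.colon_singleton_of_notMem hr, hQ.radical]

end Ideal

namespace PrimeFiltration

variable {k : Type*} [Field k] {σ : Type*} {I : Ideal (MvPolynomial σ k)}
  (F : PrimeFiltration k I)

theorem cyclic_singleton {i : ℕ} (hi : i < F.len) :
    ∃ v, F.c (i + 1) = F.c i ⊔ Ideal.span {v} ∧ (F.c i).colon {v} = F.p (i + 1) := by
  obtain ⟨v, hsup, hcolon⟩ := F.cyclic i hi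
  exact ⟨v, hsup, by rwa [← Ideal.colon_span]⟩

theorem exists_colon_singleton_eq (hF : F.IsPrettyClean) {i : ℕ} (hi : i < F.len) {j : ℕ}
    (hj : j ≤ i) : ∃ w, (F.c j).colon {w} = F.p (i + 1) := by
  induction hj using Nat.decreasingInduction with
  | self =>
    obtain ⟨v, -, hv⟩ := F.cyclic_singleton hi
    exact ⟨v, hv⟩
  | of_succ j hji ih =>
    obtain ⟨w, hw⟩ := ih
    obtain ⟨v, hsup, hv⟩ := F.cyclic_singleton (hji.trans hi)
    by_cases hle : F.p (j + 1) ≤ F.p (i + 1)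
    · exact ⟨v, hv.trans (hF (j + 1) (i + 1) j.succ_pos (by omega) hi hle)⟩
    · obtain ⟨s, hs, hsp⟩ := SetLike.not_le_iff_exists.mp hle
      exact ⟨s * w, Ideal.colon_singleton_mul_eq_of_sup (F.prime i hi) (hv ▸ hs) hsp
        (hsup ▸ hw)⟩

theorem mem_supp_of_radical_colon_singleton_eq {P : Ideal (MvPolynomial σ k)} (hP : P.IsPrime)
    {j : ℕ} (hj : j ≤ F.len) {w : MvPolynomial σ k} (hw : ((F.c j).colon {w}).radical = P) :
    P ∈ F.supp := by
  induction hj using Nat.decreasingInduction generalizing w with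
  | self =>
    rw [F.last, Submodule.top_colon, Ideal.radical_top] at hw
    exact absurd hw.symm hP.ne_top
  | of_succ j hj ih =>
    obtain ⟨v, hsup, hv⟩ := F.cyclic_singleton hj
    rcases Ideal.radical_colon_sup_eq_or_eq hP (F.prime j hj) hv hw with hw' | hPj
    · exact ih (hsup ▸ hw')
    · exact ⟨j, hj, hPj⟩

theorem supp_eq_associatedPrimes (hF : F.IsPrettyClean) :
    F.supp = associatedPrimes (MvPolynomial σ k) (MvPolynomial σ k ⧸ I) := by
  ext P
  rw [AssociatedPrimes.mem_iff, Ideal.isAssociatedPrime_quotient_iff]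
  constructor
  · rintro ⟨i, hi, rfl⟩
    obtain ⟨w, hw⟩ := F.exists_colon_singleton_eq hF hi (Nat.zero_le i)
    rw [F.first] at hw
    exact ⟨F.prime i hi, w, by rw [hw, (F.prime i hi).radical]⟩
  · rintro ⟨hP, w, rfl⟩
    exact F.mem_supp_of_radical_colon_singleton_eq hP (Nat.zero_le _) (by rw [F.first])

end PrimeFiltration

theorem statement13_general (k : Type*) [Field k] {σ : Type*} (I : Ideal (MvPolynomial σ k)) :
    (∀ F : PrimeFiltration k I, F.IsPrettyClean →
      F.supp = associatedPrimes (MvPolynomial σ k) (MvPolynomial σ k ⧸ I)) ∧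
    (∀ m : ℕ,
      associatedPrimes (MvPolynomial σ k) (MvPolynomial σ k ⧸ I ^ m) =
        (I ^ m).minimalPrimes →
      (∀ F : PrimeFiltration k (I ^ m), ¬ F.supp ⊆ (I ^ m).minimalPrimes) →
      ¬ IsPrettyCleanIdeal k (I ^ m)) := by
  refine ⟨fun F hF => F.supp_eq_associatedPrimes hF, ?_⟩
  rintro m hass hnot ⟨F, hF⟩
  exact hnot F (by rw [F.supp_eq_associatedPrimes hF, hass])

/-- A pretty clean filtration has support equal to `Ass(S/I)`; in
particular, if `Ass(S/I^m) = Min(I^m)` and every prime filtration of `S/I^m` has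
primes that are not all minimal, then `S/I^m` is not pretty clean. -/
theorem statement13 (k : Type*) [Field k] {σ : Type*} (I : Ideal (MvPolynomial σ k))
    (hmono : IsMonomialIdeal k I) :
    (∀ F : PrimeFiltration k I, F.IsPrettyClean →
      F.supp = associatedPrimes (MvPolynomial σ k) (MvPolynomial σ k ⧸ I)) ∧
    (∀ m : ℕ,
      associatedPrimes (MvPolynomial σ k) (MvPolynomial σ k ⧸ I ^ m) =
        (I ^ m).minimalPrimes →
      (∀ F : PrimeFiltration k (I ^ m), ¬ F.supp ⊆ (I ^ m).minimalPrimes) →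
      ¬ IsPrettyCleanIdeal k (I ^ m)) :=
  statement13_general k I
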